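/- Let (X_t) be adapted to a filtration (F_t) with E[X_t | F_{t−1}] = μ and ‖X_t‖ ≤ B almost surely, with X̄_{t−1} the running mean of X_1,...,X_{t−1} (X̄_0 arbitrary with ‖X̄_0‖ ≤ B). Let (λ_t) be a predictable [0,1)-valued sequence, θ ∈ S^{d−1}. Then the process N_t(θ) = Π_{i≤t} exp{ (λ_i/(2B))⟨θ, X_i − μ⟩ − (ψ_E(λ_i)/(2B)²)⟨θ, X_i − X̄_{i−1}⟩² } is a nonnegative supermartingale with respect to (F_t). -/

import Mathlib

open MeasureTheory ProbabilityTheory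
open scoped RealInnerProductSpace

/-- `ψ_E(λ) = −λ − log(1−λ)`. -/
noncomputable def psiE (l : ℝ) : ℝ := -l - Real.log (1 - l)

/-!
Put `v = ⟪θ, X_t - X̄_{t-1}⟫ / (2B) ∈ [-1, 1]` and `b = λ_t ⟪θ, X̄_{t-1} - μ⟫ / (2B)`, which is
known at time `t - 1`. The exponent of the `t`-th factor is `λ_t v - ψ_E(λ_t) v² + b`, so Fan's
inequality `exp (λ v - ψ_E(λ) v²) ≤ 1 + λ v` bounds the factor by
`e^b (1 - b + λ_t ⟪θ, X_t - μ⟫ / (2B))`. Its conditional expectation given `ℱ_{t-1}` is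
`e^b (1 - b) ≤ 1`, because `1 + x ≤ eˣ`.
-/

lemma psiE_nonneg {l : ℝ} (hl : l < 1) : 0 ≤ psiE l := by
  have := Real.log_le_sub_one_of_pos (x := 1 - l) (by linarith)
  rw [psiE]
  linarith

lemma hasDerivAt_psiE {x : ℝ} (hx : x < 1) : HasDerivAt psiE (x / (1 - x)) x := by
  have hne : 1 - x ≠ 0 := sub_ne_zero.2 hx.ne'
  have hlog : HasDerivAt (fun y => Real.log (1 - y)) (-1 / (1 - x)) x := by
    simpa using ((hasDerivAt_id' x).const_sub 1).log hne
  rw [show x / (1 - x) = -1 - -1 / (1 - x) by field_simp; ring]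
  exact (hasDerivAt_id' x).neg.sub hlog

@[fun_prop]
lemma measurable_psiE : Measurable psiE := by
  unfold psiE
  fun_prop

lemma mul_sub_psiE_mul_sq_le_log_one_add {l v : ℝ} (h0 : 0 ≤ l) (h1 : l < 1) (hv : -1 ≤ v) :
    l * v - psiE l * v ^ 2 ≤ Real.log (1 + l * v) := by
  -- `x ↦ log (1 + x v) - x v + ψ_E(x) v²` vanishes at `0` and is nondecreasing on `[0, l]`.
  set h : ℝ → ℝ := fun x => Real.log (1 + x * v) - x * v + psiE x * v ^ 2
  have hderiv : ∀ x ∈ Set.Icc 0 l,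
      HasDerivAt h (x ^ 2 * v ^ 2 * (1 + v) / ((1 - x) * (1 + x * v))) x := by
    rintro x ⟨hx0, hxl⟩
    have h1x : 0 < 1 - x := by linarith
    have hxv : 0 < 1 + x * v := by nlinarith
    have hlog : HasDerivAt (fun y => Real.log (1 + y * v)) (v / (1 + x * v)) x := by
      simpa using (((hasDerivAt_id' x).mul_const v).const_add 1).log hxv.ne'
    rw [show x ^ 2 * v ^ 2 * (1 + v) / ((1 - x) * (1 + x * v))
        = v / (1 + x * v) - v + x / (1 - x) * v ^ 2 by field_simp; ring]
    exact (hlog.sub (hasDerivAt_mul_const v)).add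
      ((hasDerivAt_psiE (by linarith)).mul_const (v ^ 2))
  have hmono : MonotoneOn h (Set.Icc 0 l) := by
    refine monotoneOn_of_hasDerivWithinAt_nonneg (convex_Icc 0 l)
      (fun x hx => (hderiv x hx).continuousAt.continuousWithinAt)
      (fun x hx => (hderiv x (interior_subset hx)).hasDerivWithinAt) fun x hx => ?_
    obtain ⟨hx0, hxl⟩ := (interior_subset hx : x ∈ Set.Icc 0 l)
    have h1x : 0 < 1 - x := by linarith
    have hxv : 0 < 1 + x * v := by nlinarith
    have : 0 ≤ 1 + v := by linarith
    positivity
  have := hmono (Set.left_mem_Icc.2 h0) (Set.right_mem_Icc.2 h0) h0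
  simp only [h, psiE, zero_mul, add_zero, Real.log_one, sub_zero, neg_zero] at this ⊢
  linarith

/-- Fan's inequality. -/
lemma exp_mul_sub_psiE_mul_sq_le_one_add {l v : ℝ} (h0 : 0 ≤ l) (h1 : l < 1) (hv : -1 ≤ v) :
    Real.exp (l * v - psiE l * v ^ 2) ≤ 1 + l * v := by
  have hpos : 0 < 1 + l * v := by nlinarith
  calc Real.exp (l * v - psiE l * v ^ 2) ≤ Real.exp (Real.log (1 + l * v)) :=
        Real.exp_le_exp.2 (mul_sub_psiE_mul_sq_le_log_one_add h0 h1 hv)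
    _ = 1 + l * v := Real.exp_log hpos

/-- The exponent of the `i`-th factor, written in terms of `w = ⟪θ, X_i - μ⟫` and
`a = ⟪θ, X̄_{i-1} - μ⟫`, so that `⟪θ, X_i - X̄_{i-1}⟫ = w - a`. -/
noncomputable def empiricalBernsteinExponent (B l w a : ℝ) : ℝ :=
  l / (2 * B) * w - psiE l / (2 * B) ^ 2 * (w - a) ^ 2

lemma empiricalBernsteinExponent_le {B l w a : ℝ} (hB : 0 < B) (h0 : 0 ≤ l) (h1 : l < 1) :
    empiricalBernsteinExponent B l w a ≤ |w| / (2 * B) := by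
  have hψ : 0 ≤ psiE l / (2 * B) ^ 2 * (w - a) ^ 2 := by
    have := psiE_nonneg h1
    positivity
  have hlw : l * w / (2 * B) ≤ |w| / (2 * B) := by
    gcongr
    nlinarith [le_abs_self w, abs_nonneg w]
  rw [empiricalBernsteinExponent, div_mul_eq_mul_div]
  linarith

lemma exp_empiricalBernsteinExponent_le {B l w a : ℝ} (hB : 0 < B) (h0 : 0 ≤ l) (h1 : l < 1)
    (hwa : |w - a| ≤ 2 * B) :
    Real.exp (empiricalBernsteinExponent B l w a)
      ≤ Real.exp (l / (2 * B) * a) * (1 - l / (2 * B) * a + l / (2 * B) * w) := by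
  set v := (w - a) / (2 * B)
  have hv : -1 ≤ v := by
    rw [le_div_iff₀ (by positivity)]
    linarith [neg_abs_le (w - a)]
  have h_split : empiricalBernsteinExponent B l w a
      = l / (2 * B) * a + (l * v - psiE l * v ^ 2) := by
    simp only [empiricalBernsteinExponent, v]
    field_simp
    ring
  rw [h_split, Real.exp_add]
  refine (mul_le_mul_of_nonneg_left (exp_mul_sub_psiE_mul_sq_le_one_add h0 h1 hv)
    (Real.exp_pos _).le).trans_eq ?_
  simp only [v]
  field_simp
  ring

lemma norm_inv_natCast_smul_sum_range_le {E : Type*} [SeminormedAddCommGroup E]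
    [NormedSpace ℝ E] {x : ℕ → E} {B : ℝ} {n : ℕ} (hn : 0 < n) (hx : ∀ j < n, ‖x j‖ ≤ B) :
    ‖(n : ℝ)⁻¹ • ∑ j ∈ Finset.range n, x j‖ ≤ B := by
  have hsum : ‖∑ j ∈ Finset.range n, x j‖ ≤ n * B := by
    simpa using norm_sum_le_of_le (Finset.range n) fun j hj => hx j (Finset.mem_range.1 hj)
  rw [norm_smul, norm_inv, RCLike.norm_natCast, inv_mul_le_iff₀ (by exact_mod_cast hn)]
  exact hsum

lemma abs_inner_sub_le_of_norm_eq_one {E : Type*} [NormedAddCommGroup E] [InnerProductSpace ℝ E]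
    {θ : E} (hθ : ‖θ‖ = 1) (x y : E) : |⟪θ, x - y⟫| ≤ ‖x‖ + ‖y‖ :=
  calc |⟪θ, x - y⟫| ≤ ‖θ‖ * ‖x - y‖ := abs_real_inner_le_norm θ (x - y)
    _ ≤ ‖x‖ + ‖y‖ := by rw [hθ, one_mul]; exact norm_sub_le x y

section Probability

variable {Ω : Type*} {m0 : MeasurableSpace Ω} {P : Measure Ω} [IsFiniteMeasure P]

theorem supermartingale_prod_of_condExp_le_one {ℱ : Filtration ℕ m0} {Y : ℕ → Ω → ℝ}
    (hY_meas : ∀ i, StronglyMeasurable[ℱ (i + 1)] (Y i)) (hY_nonneg : ∀ i ω, 0 ≤ Y i ω)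
    (hY_bdd : ∀ i, ∃ C, ∀ᵐ ω ∂P, ‖Y i ω‖ ≤ C) (hY_cond : ∀ i, P[Y i | ℱ i] ≤ᵐ[P] 1) :
    Supermartingale (fun t ω => ∏ i ∈ Finset.range t, Y i ω) ℱ P := by
  set N : ℕ → Ω → ℝ := fun t ω => ∏ i ∈ Finset.range t, Y i ω
  have hN_succ : ∀ t, N (t + 1) = N t * Y t := fun t => funext fun ω => Finset.prod_range_succ _ _
  have hN_adapted : StronglyAdapted ℱ N := fun t => Finset.stronglyMeasurable_fun_prod _
    fun i hi => (hY_meas i).mono (ℱ.mono (Finset.mem_range.1 hi))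
  have hY_int : ∀ i, Integrable (Y i) P := fun i =>
    .of_bound ((hY_meas i).mono (ℱ.le _)).aestronglyMeasurable _ (hY_bdd i).choose_spec
  have hN_int : ∀ t, Integrable (N t) P := by
    intro t
    induction t with
    | zero => simp [N]
    | succ t ih =>
      rw [hN_succ]
      exact ih.mul_bdd (hY_int t).aestronglyMeasurable (hY_bdd t).choose_spec
  refine supermartingale_nat hN_adapted hN_int fun t => ?_
  rw [hN_succ]
  filter_upwards [condExp_mul_of_stronglyMeasurable_left (hN_adapted t)
    (hN_succ t ▸ hN_int (t + 1)) (hY_int t), hY_cond t] with ω h_pull h_le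
  rw [h_pull, Pi.mul_apply]
  exact mul_le_of_le_one_right (Finset.prod_nonneg fun i _ => hY_nonneg i ω) h_le

/-- The conditional expectation of the bound is `e^b (1 - b) ≤ e^b e^{-b} = 1`. -/
theorem condExp_le_one_of_le_exp_mul {m : MeasurableSpace Ω} (hm : m ≤ m0)
    {Y W b c : Ω → ℝ} {Cb Cc : ℝ}
    (hb : StronglyMeasurable[m] b) (hc : StronglyMeasurable[m] c)
    (hb_bdd : ∀ᵐ ω ∂P, |b ω| ≤ Cb) (hc_bdd : ∀ᵐ ω ∂P, |c ω| ≤ Cc)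
    (hY : Integrable Y P) (hW : Integrable W P) (hW_cond : P[W | m] =ᵐ[P] 0)
    (hYW : ∀ᵐ ω ∂P, Y ω ≤ Real.exp (b ω) * (1 - b ω + c ω * W ω)) :
    P[Y | m] ≤ᵐ[P] 1 := by
  set A : Ω → ℝ := fun ω => Real.exp (b ω) * (1 - b ω)
  set D : Ω → ℝ := fun ω => Real.exp (b ω) * c ω
  have hA : StronglyMeasurable[m] A :=
    ((hb.measurable.exp).mul (measurable_const.sub hb.measurable)).stronglyMeasurable
  have hD : StronglyMeasurable[m] D :=
    ((hb.measurable.exp).mul hc.measurable).stronglyMeasurable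
  have hA_int : Integrable A P := by
    refine .of_bound (hA.mono hm).aestronglyMeasurable (Real.exp Cb * (1 + Cb)) ?_
    filter_upwards [hb_bdd] with ω hω
    rw [Real.norm_eq_abs, abs_mul, Real.abs_exp]
    have hb_le := abs_le.1 hω
    exact mul_le_mul (Real.exp_le_exp.2 hb_le.2) (abs_le.2 ⟨by linarith, by linarith⟩)
      (abs_nonneg _) (Real.exp_pos _).le
  have hDW_int : Integrable (D * W) P := by
    refine hW.bdd_mul (hD.mono hm).aestronglyMeasurable (c := Real.exp Cb * Cc) ?_
    filter_upwards [hb_bdd, hc_bdd] with ω hbω hcω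
    rw [Real.norm_eq_abs, abs_mul, Real.abs_exp]
    gcongr
    exact hbω.trans' (le_abs_self _)
  have h_cond : P[A + D * W | m] =ᵐ[P] A := by
    filter_upwards [condExp_add hA_int hDW_int m,
      condExp_mul_of_stronglyMeasurable_left hD hDW_int hW, hW_cond] with ω h_add h_pull hW0
    rw [h_add, Pi.add_apply, h_pull, Pi.mul_apply, hW0, condExp_of_stronglyMeasurable hm hA hA_int]
    simp
  have hA_le : ∀ ω, A ω ≤ 1 := fun ω => by
    calc A ω ≤ Real.exp (b ω) * Real.exp (-b ω) := by
          refine mul_le_mul_of_nonneg_left ?_ (Real.exp_pos _).le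
          linarith [Real.add_one_le_exp (-b ω)]
      _ = 1 := by rw [← Real.exp_add, add_neg_cancel, Real.exp_zero]
  have h_mono := condExp_mono (m := m) hY (hA_int.add hDW_int) (by
    filter_upwards [hYW] with ω hω
    simp only [Pi.add_apply, Pi.mul_apply, A, D]
    linarith)
  filter_upwards [h_mono, h_cond] with ω h_le h_eq
  exact (h_le.trans_eq h_eq).trans (hA_le ω)

theorem condExp_inner_sub_eq_zero {E : Type*} [NormedAddCommGroup E] [InnerProductSpace ℝ E]
    [CompleteSpace E] {m : MeasurableSpace Ω} (hm : m ≤ m0) {X : Ω → E} {μ : E}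
    (hX : Integrable X P) (hX_cond : P[X | m] =ᵐ[P] fun _ => μ) (θ : E) :
    P[fun ω => ⟪θ, X ω - μ⟫ | m] =ᵐ[P] 0 := by
  have hXμ : Integrable (X - fun _ => μ) P := hX.sub (integrable_const μ)
  filter_upwards [((innerSL ℝ θ).comp_condExp_comm hXμ (m := m)).symm,
    condExp_sub hX (integrable_const μ) m, hX_cond] with ω h_comm h_sub hω
  change P[innerSL ℝ θ ∘ (X - fun _ => μ) | m] ω = 0
  rw [h_comm, Function.comp_apply, h_sub, Pi.sub_apply, hω, condExp_const hm]
  simp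

lemma stronglyMeasurable_inv_natCast_smul_sum_range {E : Type*} [NormedAddCommGroup E]
    [NormedSpace ℝ E] {ℱ : Filtration ℕ m0} {X : ℕ → Ω → E}
    (hX : ∀ i, StronglyMeasurable[ℱ (i + 1)] (X i)) (n : ℕ) :
    StronglyMeasurable[ℱ n] fun ω => (n : ℝ)⁻¹ • ∑ j ∈ Finset.range n, X j ω :=
  (Finset.stronglyMeasurable_fun_sum _ fun j hj =>
    (hX j).mono (ℱ.mono (Finset.mem_range.1 hj))).const_smul _

theorem supermartingale_prod_exp_empiricalBernsteinExponent {ℱ : Filtration ℕ m0}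
    {W a lam : ℕ → Ω → ℝ} {B K : ℝ} (hB : 0 < B)
    (hW_meas : ∀ i, StronglyMeasurable[ℱ (i + 1)] (W i))
    (ha_meas : ∀ i, StronglyMeasurable[ℱ i] (a i)) (hlam_meas : ∀ i, Measurable[ℱ i] (lam i))
    (hlam : ∀ i ω, 0 ≤ lam i ω ∧ lam i ω < 1)
    (hW_bdd : ∀ i, ∀ᵐ ω ∂P, |W i ω| ≤ K) (ha_bdd : ∀ i, ∀ᵐ ω ∂P, |a i ω| ≤ K)
    (hWa : ∀ i, ∀ᵐ ω ∂P, |W i ω - a i ω| ≤ 2 * B) (hW_cond : ∀ i, P[W i | ℱ i] =ᵐ[P] 0) :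
    Supermartingale (fun t ω => ∏ i ∈ Finset.range t,
      Real.exp (empiricalBernsteinExponent B (lam i ω) (W i ω) (a i ω))) ℱ P := by
  set Y : ℕ → Ω → ℝ := fun i ω => Real.exp (empiricalBernsteinExponent B (lam i ω) (W i ω) (a i ω))
  have hY_meas : ∀ i, StronglyMeasurable[ℱ (i + 1)] (Y i) := by
    intro i
    have hlam' := (hlam_meas i).mono (ℱ.mono i.le_succ) le_rfl
    have ha' := ((ha_meas i).mono (ℱ.mono i.le_succ)).measurable
    have hW' := (hW_meas i).measurable
    refine Measurable.stronglyMeasurable ?_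
    simp only [Y, empiricalBernsteinExponent]
    fun_prop
  have hY_bdd : ∀ i, ∀ᵐ ω ∂P, ‖Y i ω‖ ≤ Real.exp (K / (2 * B)) := by
    intro i
    filter_upwards [hW_bdd i] with ω hω
    rw [Real.norm_eq_abs, Real.abs_exp, Real.exp_le_exp]
    exact (empiricalBernsteinExponent_le hB (hlam i ω).1 (hlam i ω).2).trans (by gcongr)
  refine supermartingale_prod_of_condExp_le_one hY_meas (fun i ω => (Real.exp_pos _).le)
    (fun i => ⟨_, hY_bdd i⟩) fun i => ?_
  have hc_bdd : ∀ ω, |lam i ω / (2 * B)| ≤ 1 / (2 * B) := fun ω => by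
    rw [abs_of_nonneg (by have := (hlam i ω).1; positivity)]
    gcongr
    exact (hlam i ω).2.le
  refine condExp_le_one_of_le_exp_mul (ℱ.le i) (b := fun ω => lam i ω / (2 * B) * a i ω)
    (c := fun ω => lam i ω / (2 * B)) (Cb := 1 / (2 * B) * K)
    (((hlam_meas i).div_const _).stronglyMeasurable.mul (ha_meas i))
    ((hlam_meas i).div_const _).stronglyMeasurable ?_ (ae_of_all _ hc_bdd)
    (.of_bound ((hY_meas i).mono (ℱ.le _)).aestronglyMeasurable _ (hY_bdd i))
    (.of_bound ((hW_meas i).mono (ℱ.le _)).aestronglyMeasurable K (hW_bdd i)) (hW_cond i) ?_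
  · filter_upwards [ha_bdd i] with ω hω
    rw [abs_mul]
    exact mul_le_mul (hc_bdd ω) hω (abs_nonneg _) (by positivity)
  · filter_upwards [hWa i] with ω hω
    exact exp_empiricalBernsteinExponent_le hB (hlam i ω).1 (hlam i ω).2 hω

end Probability

theorem empirical_bernstein_supermartingale {d : ℕ} {Ω : Type*} {m0 : MeasurableSpace Ω}
    (P : Measure Ω) [IsProbabilityMeasure P]
    (ℱ : Filtration ℕ m0)
    -- `X i` is the (i+1)-st observation, measurable at time i+1
    (X : ℕ → Ω → EuclideanSpace ℝ (Fin d))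
    (hadap : ∀ i, StronglyMeasurable[ℱ (i + 1)] (X i))
    (B : ℝ) (hB : 0 < B)
    (hbdd : ∀ i, ∀ᵐ ω ∂P, ‖X i ω‖ ≤ B)
    (μ : EuclideanSpace ℝ (Fin d))
    (hcmean : ∀ i, P[X i | ℱ i] =ᵐ[P] fun _ => μ)
    -- running means: `Xbar 0` is an arbitrary `ℱ 0`-measurable point of norm ≤ B;
    -- `Xbar i` is the sample mean of the first i observations
    (Xbar : ℕ → Ω → EuclideanSpace ℝ (Fin d))
    (hXbar0meas : StronglyMeasurable[ℱ 0] (Xbar 0))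
    (hXbar0 : ∀ ω, ‖Xbar 0 ω‖ ≤ B)
    (hXbar : ∀ i, 1 ≤ i → ∀ ω, Xbar i ω = (i : ℝ)⁻¹ • ∑ j ∈ Finset.range i, X j ω)
    -- predictable [0,1)-valued sequence
    (lam : ℕ → Ω → ℝ)
    (hlammeas : ∀ i, Measurable[ℱ i] (lam i))
    (hlam : ∀ i ω, 0 ≤ lam i ω ∧ lam i ω < 1)
    (θ : EuclideanSpace ℝ (Fin d)) (hθ : ‖θ‖ = 1) :
    Supermartingale
      (fun t ω => ∏ i ∈ Finset.range t,
        Real.exp (lam i ω / (2 * B) * ⟪θ, X i ω - μ⟫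
          - psiE (lam i ω) / (2 * B) ^ 2 * ⟪θ, X i ω - Xbar i ω⟫ ^ 2)) ℱ P ∧
    ∀ t ω, 0 ≤ ∏ i ∈ Finset.range t,
        Real.exp (lam i ω / (2 * B) * ⟪θ, X i ω - μ⟫
          - psiE (lam i ω) / (2 * B) ^ 2 * ⟪θ, X i ω - Xbar i ω⟫ ^ 2) := by
  have hX_bdd : ∀ᵐ ω ∂P, ∀ i, ‖X i ω‖ ≤ B := ae_all_iff.2 hbdd
  have hXbar_meas : ∀ i, StronglyMeasurable[ℱ i] (Xbar i) := by
    rintro (_ | i)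
    · exact hXbar0meas
    · rw [funext (hXbar _ i.succ_pos)]
      exact stronglyMeasurable_inv_natCast_smul_sum_range hadap _
  have hXbar_bdd : ∀ᵐ ω ∂P, ∀ i, ‖Xbar i ω‖ ≤ B := by
    filter_upwards [hX_bdd] with ω hω
    rintro (_ | i)
    · exact hXbar0 ω
    · rw [hXbar _ i.succ_pos]
      exact norm_inv_natCast_smul_sum_range_le i.succ_pos fun j _ => hω j
  have h_inner : ∀ i ω, ⟪θ, X i ω - Xbar i ω⟫ = ⟪θ, X i ω - μ⟫ - ⟪θ, Xbar i ω - μ⟫ :=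
    fun i ω => by rw [← inner_sub_right, sub_sub_sub_cancel_right]
  simp only [h_inner]
  refine ⟨supermartingale_prod_exp_empiricalBernsteinExponent (K := B + ‖μ‖) hB
    (fun i => stronglyMeasurable_const.inner ((hadap i).sub stronglyMeasurable_const))
    (fun i => stronglyMeasurable_const.inner ((hXbar_meas i).sub stronglyMeasurable_const))
    hlammeas hlam (fun i => ?_) (fun i => ?_) (fun i => ?_) (fun i => ?_),
    fun t ω => Finset.prod_nonneg fun i _ => (Real.exp_pos _).le⟩
  · filter_upwards [hbdd i] with ω hω
    exact (abs_inner_sub_le_of_norm_eq_one hθ _ _).trans (by linarith)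
  · filter_upwards [hXbar_bdd] with ω hω
    exact (abs_inner_sub_le_of_norm_eq_one hθ _ _).trans (by linarith [hω i])
  · filter_upwards [hbdd i, hXbar_bdd] with ω hXω hXbarω
    rw [← h_inner]
    exact (abs_inner_sub_le_of_norm_eq_one hθ _ _).trans (by linarith [hXbarω i])
  · exact condExp_inner_sub_eq_zero (ℱ.le i)
      (.of_bound ((hadap i).mono (ℱ.le _)).aestronglyMeasurable B (hbdd i)) (hcmean i) θ
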